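/- Consider a budgeting process on a sequence of candidates where each voter starts with budget k/n, a candidate c is selected iff its supporters (voters with positive utility for c) have total remaining budget at least 1 (in which case they pay 1 in total), and only supporters of selected candidates ever have their budget reduced. Then for any group S of voters with |S| ≥ n/k all of whom assign positive utility to some common candidate c in the sequence, at least one voter in S assigns positive utility to some selected candidate. -/
import Mathlib


/-- The Greedy Budgeting rule satisfies Justified Representation:
voters start with budget `k/n`; a candidate is selected iff its supporters
have total remaining budget at least `1` (in which case they pay `1` in
total); only supporters of selected candidates ever have their budgets
reduced.  Then any group `S` with `|S| ≥ n/k` whose members all assign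
positive utility to a common candidate `c` contains a voter assigning
positive utility to some selected candidate. -/
theorem greedy_budgeting_JR (n m k : ℕ) (hn : 0 < n) (hk : 2 ≤ k)
    (u : Fin n → Fin m → ℝ) (hu : ∀ i j, 0 ≤ u i j)
    (b : ℕ → Fin n → ℝ)
    (selected : Fin m → Prop)
    (hinit : ∀ i, b 0 i = (k : ℝ) / n)
    (hsel : ∀ j : Fin m,
      selected j ↔ 1 ≤ ∑ i ∈ Finset.univ.filter (fun i => 0 < u i j), b j.val i)
    (hpay : ∀ j : Fin m, selected j →
      (∑ i ∈ Finset.univ.filter (fun i => 0 < u i j), b (j.val + 1) i) =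
        (∑ i ∈ Finset.univ.filter (fun i => 0 < u i j), b j.val i) - 1)
    (hnored : ∀ j : Fin m, ∀ i, ¬ (selected j ∧ 0 < u i j) →
      b (j.val + 1) i = b j.val i)
    (hmono : ∀ j : Fin m, ∀ i, b (j.val + 1) i ≤ b j.val i)
    (hnonneg : ∀ t i, 0 ≤ b t i)
    (S : Finset (Fin n)) (c : Fin m)
    (hS : (n : ℝ) / k ≤ S.card)
    (hSc : ∀ i ∈ S, 0 < u i c) :
    ∃ i ∈ S, ∃ j : Fin m, selected j ∧ 0 < u i j := by
  by_contra h
  push_neg at h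
  -- budgets of members of S never change
  have hconst : ∀ t, t ≤ c.val → ∀ i ∈ S, b t i = (k : ℝ) / n := by
    intro t
    induction t with
    | zero => intro _ i _; exact hinit i
    | succ t ih =>
      intro ht i hi
      have htm : t < m := lt_of_lt_of_le (Nat.lt_of_succ_le ht) (Nat.le_of_lt c.isLt)
      have := hnored ⟨t, htm⟩ i (by
        intro ⟨hsel', hpos⟩
        exact absurd hpos (not_lt.mpr (h i hi ⟨t, htm⟩ hsel')))
      rw [this]
      exact ih (Nat.le_of_succ_le ht) i hi
  -- supporters of c include S, so their budget sum is at least 1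
  have hSsub : S ⊆ Finset.univ.filter (fun i => 0 < u i c) := by
    intro i hi
    simp [hSc i hi]
  have hk0 : (0:ℝ) < k := by positivity
  have hsum : 1 ≤ ∑ i ∈ Finset.univ.filter (fun i => 0 < u i c), b c.val i := by
    have h1 : ∑ i ∈ S, b c.val i ≤ ∑ i ∈ Finset.univ.filter (fun i => 0 < u i c), b c.val i :=
      Finset.sum_le_sum_of_subset_of_nonneg hSsub (fun i _ _ => hnonneg _ i)
    have h2 : ∑ i ∈ S, b c.val i = S.card * ((k:ℝ)/n) := by
      rw [Finset.sum_congr rfl (fun i hi => hconst c.val le_rfl i hi)]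
      simp [mul_comm]
    have h3 : (1:ℝ) ≤ S.card * ((k:ℝ)/n) := by
      have hn0 : (0:ℝ) < n := by positivity
      rw [div_le_iff₀ hk0] at hS
      rw [mul_div_assoc', le_div_iff₀ hn0, one_mul]
      exact hS
    linarith [h1, h2.symm ▸ h3]
  have hcsel : selected c := (hsel c).mpr hsum
  have hScard : 0 < S.card := by
    by_contra hc
    push_neg at hc
    interval_cases h' : S.card
    · simp [h'] at hS
      have : (0:ℝ) < (n:ℝ)/k := by positivity
      linarith
  obtain ⟨i, hi⟩ := Finset.card_pos.mp hScard
  exact absurd (hSc i hi) (not_lt.mpr (h i hi c hcsel))
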